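/- Let 𝒜 be an infinite family of pairwise almost disjoint infinite-dimensional subspaces of V. Then there exists a nonprincipal ultrafilter D on V such that D ⊕ D = D, every subspace of V of finite codimension belongs to D, and V \ S[n] ∈ D for every S ∈ 𝒜 and n < ω (in particular no member of 𝒜 belongs to D). -/

import Mathlib

open Set

/-- `V = ⊕_{n<ω} 𝔽₂`, realized as finitely supported functions `ℕ →₀ 𝔽₂`. -/
abbrev V : Type := ℕ →₀ ZMod 2

/-- The basis vectors `x_n` of `V`. -/
noncomputable def xb (n : ℕ) : V := Finsupp.single n 1

/-- `S[n] = (⊕_{l<n} 𝔽₂ x_l) + S`. -/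
def brack (S : Submodule (ZMod 2) V) (n : ℕ) : Set V :=
  {v | ∃ w ∈ Submodule.span (ZMod 2) {z : V | ∃ l < n, z = xb l}, ∃ s ∈ S, v = w + s}

/-- The sum `D₁ ⊕ D₂` of two ultrafilters on the additive group `V`:
`A ∈ D₁ ⊕ D₂` iff for `D₁`-almost all `s₁`, for `D₂`-almost all `s₂`, `s₁ + s₂ ∈ A`. -/
noncomputable def oplus (D₁ D₂ : Ultrafilter V) : Ultrafilter V :=
  D₁.bind fun s₁ => D₂.map fun s₂ => s₁ + s₂

/-- The set `𝒟` of nonprincipal ultrafilters on `V` containing every subspace of finite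
codimension and containing `V \ S[n]` for every `S ∈ 𝒜` and `n < ω`. -/
def scrD (𝒜 : Set (Submodule (ZMod 2) V)) : Set (Ultrafilter V) :=
  {D | (∀ v : V, ({v} : Set V) ∉ D) ∧
       (∀ W : Submodule (ZMod 2) V, Module.Finite (ZMod 2) (V ⧸ W) → (W : Set V) ∈ D) ∧
       (∀ S ∈ 𝒜, ∀ n : ℕ, Set.univ \ brack S n ∈ D)}

/-!
`scrD 𝒜` is a closed subsemigroup of `(βV, ⊕)`, so by the Ellis–Numakura lemma it contains an
idempotent as soon as it is nonempty. It is closed under `⊕` because `S[m]` is a subgroup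
containing `S[n]` for `m ≥ n`, and every vector lies in some `⊕_{l<m} 𝔽₂x_l`.
For nonemptiness, each `T ∈ 𝒜` meets every subspace of finite codimension in an infinite set, so
some nonprincipal ultrafilter contains `T` and all these subspaces; by almost disjointness it
contains `V \ S[n]` for every `S ∈ 𝒜` other than `T`. The limit of these ultrafilters along a
nonprincipal ultrafilter on `𝒜` then contains every `V \ S[n]`.
-/

open Filter

section FiniteCodim

variable {R M : Type*} [Ring R] [AddCommGroup M] [Module R M]

theorem Submodule.finite_quotient_inf [IsNoetherianRing R] {p q : Submodule R M}
    (hp : Module.Finite R (M ⧸ p)) (hq : Module.Finite R (M ⧸ q)) :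
    Module.Finite R (M ⧸ (p ⊓ q)) := by
  refine Module.Finite.of_injective ((p ⊓ q).liftQ (p.mkQ.prod q.mkQ) ?_) ?_
  · simp [LinearMap.ker_prod]
  · rw [← LinearMap.ker_eq_bot, Submodule.ker_liftQ_eq_bot]
    simp [LinearMap.ker_prod]

theorem Submodule.not_finite_inf_of_finite_quotient [IsNoetherianRing R] {T W : Submodule R M}
    (hT : ¬ Module.Finite R T) (hW : Module.Finite R (M ⧸ W)) :
    ¬ Module.Finite R ↥(T ⊓ W) := by
  simp only [Module.Finite.iff_fg] at *
  exact fun h => hT <| Submodule.fg_of_fg_map_of_fg_inf_ker W.mkQ (IsNoetherian.noetherian _)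
    (by simpa using h)

theorem Submodule.infinite_coe_of_not_finite {T : Submodule R M} (hT : ¬ Module.Finite R T) :
    (T : Set M).Infinite :=
  fun h => hT (have := h.to_subtype; Module.Finite.of_finite)

theorem Submodule.finite_inter_sup {T S P : Submodule R M} (hP : (P : Set M).Finite)
    (hTS : ((T : Set M) ∩ S).Finite) : ((T : Set M) ∩ ↑(P ⊔ S)).Finite := by
  have hcover : (T : Set M) ∩ ↑(P ⊔ S) ⊆ ⋃ w ∈ (P : Set M), (T : Set M) ∩ {t | t - w ∈ S} := by
    rintro t ⟨htT, htPS⟩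
    obtain ⟨w, hw, s, hs, rfl⟩ := Submodule.mem_sup.1 htPS
    exact mem_biUnion hw ⟨htT, by simpa using hs⟩
  refine (hP.biUnion fun w _ => ?_).subset hcover
  rcases eq_empty_or_nonempty ((T : Set M) ∩ {t | t - w ∈ S}) with he | ⟨t₀, ht₀T, ht₀S⟩
  · simp [he]
  -- each piece is a translate of a subset of `T ∩ S`
  refine (hTS.image (t₀ + ·)).subset fun t ⟨htT, htS⟩ =>
    ⟨t - t₀, ⟨T.sub_mem htT ht₀T, ?_⟩, add_sub_cancel t₀ t⟩
  simpa using S.sub_mem htS ht₀S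

variable (R M) in
def finiteCodimFilter : Filter M :=
  ⨅ (W : Submodule R M) (_ : Module.Finite R (M ⧸ W)), 𝓟 (W : Set M)

theorem hasBasis_finiteCodimFilter [IsNoetherianRing R] :
    (finiteCodimFilter R M).HasBasis (fun W : Submodule R M => Module.Finite R (M ⧸ W)) (↑) :=
  hasBasis_biInf_principal' (fun p hp q hq => ⟨p ⊓ q, Submodule.finite_quotient_inf hp hq,
    inf_le_left, inf_le_right⟩) ⟨⊤, inferInstance⟩

theorem neBot_principal_inf_finiteCodimFilter_inf_cofinite [IsNoetherianRing R]
    {T : Submodule R M} (hT : ¬ Module.Finite R T) :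
    (𝓟 T ⊓ finiteCodimFilter R M ⊓ cofinite).NeBot := by
  refine inf_neBot_iff_frequently_left.2 fun {p} hp => frequently_cofinite_iff_infinite.2 ?_
  obtain ⟨W, hW, hTW⟩ :=
    (hasBasis_finiteCodimFilter.principal_inf (T : Set M)).eventually_iff.1 hp
  exact (Submodule.infinite_coe_of_not_finite
    (Submodule.not_finite_inf_of_finite_quotient hT hW)).mono hTW

end FiniteCodim

theorem brack_eq_sup (S : Submodule (ZMod 2) V) (n : ℕ) :
    brack S n = ↑(Finsupp.supported (ZMod 2) (ZMod 2) (Iio n) ⊔ S) := by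
  have hspan : {z : V | ∃ l < n, z = xb l} = (fun l => Finsupp.single l 1) '' Iio n := by
    ext z; simp [xb, eq_comm]
  ext v
  simp only [brack, hspan, ← Finsupp.supported_eq_span_single, SetLike.mem_coe,
    Submodule.mem_sup]
  exact ⟨fun ⟨w, hw, s, hs, h⟩ => ⟨w, hw, s, hs, h.symm⟩,
    fun ⟨w, hw, s, hs, h⟩ => ⟨w, hw, s, hs, h.symm⟩⟩

theorem subset_brack (S : Submodule (ZMod 2) V) (n : ℕ) : (S : Set V) ⊆ brack S n := by
  rw [brack_eq_sup]
  exact fun _ => Submodule.mem_sup_right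

theorem Finsupp.finite_supported {α M R : Type*} [Finite M] [AddCommMonoid M] [Semiring R]
    [Module R M] {s : Set α} (hs : s.Finite) : (supported M R s : Set (α →₀ M)).Finite := by
  have := hs.to_subtype
  have : Finite (supported M R s) := .of_equiv _
    ((supportedEquivFinsupp s).toEquiv.trans equivFunOnFinite).symm
  exact toFinite _

theorem Finsupp.exists_mem_supported_Iio {M R : Type*} [AddCommMonoid M] [Semiring R]
    [Module R M] (v : ℕ →₀ M) (n : ℕ) : ∃ m, n ≤ m ∧ v ∈ supported M R (Iio m) := by
  obtain ⟨k, hk⟩ := v.support.exists_nat_subset_range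
  refine ⟨max n k, le_max_left n k, (Finsupp.mem_supported _ v).2 fun l hl => ?_⟩
  have := Finset.mem_range.1 (hk hl)
  simp only [mem_Iio]
  omega

theorem finite_inter_brack {S T : Submodule (ZMod 2) V} (hTS : ((T : Set V) ∩ S).Finite)
    (n : ℕ) : ((T : Set V) ∩ brack S n).Finite := by
  rw [brack_eq_sup]
  exact Submodule.finite_inter_sup (Finsupp.finite_supported (finite_Iio n)) hTS

theorem exists_ultrafilter_avoiding_brack {T : Submodule (ZMod 2) V}
    (hT : ¬ Module.Finite (ZMod 2) T) :
    ∃ U : Ultrafilter V, (∀ v : V, ({v}ᶜ : Set V) ∈ U) ∧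
      (∀ W : Submodule (ZMod 2) V, Module.Finite (ZMod 2) (V ⧸ W) → (W : Set V) ∈ U) ∧
      ∀ S : Submodule (ZMod 2) V, ((T : Set V) ∩ S).Finite → ∀ n, univ \ brack S n ∈ U := by
  have := neBot_principal_inf_finiteCodimFilter_inf_cofinite hT
  set U := Ultrafilter.of (𝓟 T ⊓ finiteCodimFilter (ZMod 2) V ⊓ cofinite)
  have hle : ↑U ≤ 𝓟 T ⊓ finiteCodimFilter (ZMod 2) V ⊓ cofinite := Ultrafilter.of_le _
  have hTU : (T : Set V) ∈ U := hle (mem_inf_of_left (mem_inf_of_left (mem_principal_self _)))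
  have hcof {s : Set V} (hs : s.Finite) : sᶜ ∈ U := hle (mem_inf_of_right hs.compl_mem_cofinite)
  refine ⟨U, fun v => hcof (finite_singleton v), fun W hW => ?_, fun S hTS n => ?_⟩
  · exact hle (mem_inf_of_left (mem_inf_of_right (hasBasis_finiteCodimFilter.mem_of_mem hW)))
  · filter_upwards [hTU, hcof (finite_inter_brack hTS n)] with x hxT hx
    exact ⟨trivial, fun hxS => hx ⟨hxT, hxS⟩⟩

theorem scrD_nonempty {𝒜 : Set (Submodule (ZMod 2) V)} (hinf : 𝒜.Infinite)
    (hdim : ∀ S ∈ 𝒜, ¬ Module.Finite (ZMod 2) ↥S)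
    (had : ∀ S₁ ∈ 𝒜, ∀ S₂ ∈ 𝒜, S₁ ≠ S₂ → ((S₁ : Set V) ∩ (S₂ : Set V)).Finite) :
    (scrD 𝒜).Nonempty := by
  choose U hU using fun T : 𝒜 => exists_ultrafilter_avoiding_brack (hdim T T.2)
  have := hinf.to_subtype
  let p := Ultrafilter.of (cofinite : Filter 𝒜)
  refine ⟨p.bind U, fun v => ?_, fun W hW => ?_, fun S hS n => ?_⟩
  · rw [← Ultrafilter.compl_mem_iff_notMem]
    exact (univ_mem' fun T => (hU T).1 v : {T | {v}ᶜ ∈ U T} ∈ p)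
  · exact (univ_mem' fun T => (hU T).2.1 W hW : {T | (W : Set V) ∈ U T} ∈ p)
  · have hcof : ({⟨S, hS⟩}ᶜ : Set 𝒜) ∈ p :=
      Ultrafilter.of_le _ (finite_singleton _).compl_mem_cofinite
    refine (mem_of_superset hcof fun T hT => (hU T).2.2 S ?_ n : {T | _ ∈ U T} ∈ p)
    exact had T T.2 S hS fun h => hT (Subtype.ext h)

theorem mem_oplus {D₁ D₂ : Ultrafilter V} {A : Set V} :
    A ∈ oplus D₁ D₂ ↔ {s₁ | {s₂ | s₁ + s₂ ∈ A} ∈ D₂} ∈ D₁ := Iff.rfl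

theorem mem_oplus_of_forall {D₁ D₂ : Ultrafilter V} {A : Set V}
    (h : ∀ s₁, {s₂ | s₁ + s₂ ∈ A} ∈ D₂) : A ∈ oplus D₁ D₂ :=
  mem_oplus.2 (univ_mem' h)

theorem oplus_mem_scrD {𝒜 : Set (Submodule (ZMod 2) V)} {D₁ D₂ : Ultrafilter V}
    (h₁ : D₁ ∈ scrD 𝒜) (h₂ : D₂ ∈ scrD 𝒜) : oplus D₁ D₂ ∈ scrD 𝒜 := by
  obtain ⟨-, h₁W, -⟩ := h₁
  obtain ⟨h₂p, h₂W, h₂b⟩ := h₂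
  refine ⟨fun v => ?_, fun W hW => ?_, fun S hS n => ?_⟩
  · rw [← Ultrafilter.compl_mem_iff_notMem]
    refine mem_oplus_of_forall fun s₁ => ?_
    have : {s₂ | s₁ + s₂ ∈ ({v}ᶜ : Set V)} = {v - s₁}ᶜ := by
      ext s₂; simp [eq_sub_iff_add_eq']
    rw [this, Ultrafilter.compl_mem_iff_notMem]
    exact h₂p _
  · exact mem_oplus.2 (mem_of_superset (h₁W W hW) fun s₁ hs₁ =>
      mem_of_superset (h₂W W hW) fun s₂ hs₂ => W.add_mem hs₁ hs₂)
  · refine mem_oplus_of_forall fun s₁ => ?_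
    -- `s₁ ∈ S[m]` for some `m ≥ n`, and `S[m] ⊇ S[n]` is a subgroup, so `s₂ ∉ S[m]` suffices
    obtain ⟨m, hnm, hs₁⟩ := Finsupp.exists_mem_supported_Iio (R := ZMod 2) s₁ n
    refine mem_of_superset (h₂b S hS m) fun s₂ ⟨_, hs₂⟩ => ⟨trivial, fun hsum => hs₂ ?_⟩
    rw [brack_eq_sup] at hsum ⊢
    have hsum' := sup_le_sup_right (Finsupp.supported_mono (Iio_subset_Iio hnm)) S hsum
    simpa using Submodule.sub_mem _ hsum' (Submodule.mem_sup_left hs₁)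

theorem isClosed_scrD (𝒜 : Set (Submodule (ZMod 2) V)) : IsClosed (scrD 𝒜) := by
  have heq : scrD 𝒜 = (⋂ v : V, {D : Ultrafilter V | ({v}ᶜ : Set V) ∈ D}) ∩
      (⋂ (W : Submodule (ZMod 2) V) (_ : Module.Finite (ZMod 2) (V ⧸ W)),
        {D : Ultrafilter V | (W : Set V) ∈ D}) ∩
      ⋂ S ∈ 𝒜, ⋂ n : ℕ, {D : Ultrafilter V | univ \ brack S n ∈ D} := by
    ext D
    simp [scrD, Ultrafilter.compl_mem_iff_notMem, and_assoc]
  rw [heq]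
  refine .inter (.inter (isClosed_iInter fun _ => ?_) (isClosed_biInter fun _ _ => ?_))
    (isClosed_biInter fun _ _ => isClosed_iInter fun _ => ?_) <;>
  exact ultrafilter_isClosed_basic _

attribute [local instance] Ultrafilter.add Ultrafilter.addSemigroup

theorem oplus_eq_add (D₁ D₂ : Ultrafilter V) : oplus D₁ D₂ = D₁ + D₂ :=
  Ultrafilter.coe_injective <| Filter.ext fun A => (Ultrafilter.eventually_add D₁ D₂ (· ∈ A)).symm

/-- There is an idempotent ultrafilter in `𝒟`: a nonprincipal ultrafilter `D` on `V` with
`D ⊕ D = D`, containing every subspace of finite codimension and every `V \ S[n]`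
(in particular no member of `𝒜` belongs to `D`). -/
theorem exists_idempotent_in_scrD (𝒜 : Set (Submodule (ZMod 2) V)) (hinf : 𝒜.Infinite)
    (hdim : ∀ S ∈ 𝒜, ¬ Module.Finite (ZMod 2) ↥S)
    (had : ∀ S₁ ∈ 𝒜, ∀ S₂ ∈ 𝒜, S₁ ≠ S₂ → ((S₁ : Set V) ∩ (S₂ : Set V)).Finite) :
    ∃ D : Ultrafilter V,
      (∀ v : V, ({v} : Set V) ∉ D) ∧
      oplus D D = D ∧
      (∀ W : Submodule (ZMod 2) V, Module.Finite (ZMod 2) (V ⧸ W) → (W : Set V) ∈ D) ∧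
      (∀ S ∈ 𝒜, ∀ n : ℕ, Set.univ \ brack S n ∈ D) ∧
      (∀ S ∈ 𝒜, (S : Set V) ∉ D) := by
  obtain ⟨D, hD, hidem⟩ := exists_idempotent_in_compact_add_subsemigroup
    Ultrafilter.continuous_add_left (scrD 𝒜) (scrD_nonempty hinf hdim had)
    (isClosed_scrD 𝒜).isCompact fun D₁ h₁ D₂ h₂ => oplus_eq_add D₁ D₂ ▸ oplus_mem_scrD h₁ h₂
  obtain ⟨hp, hW, hb⟩ := hD
  refine ⟨D, hp, (oplus_eq_add D D).trans hidem, hW, hb, fun S hS hSD => ?_⟩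
  obtain ⟨x, hxS, -, hxb⟩ := Filter.nonempty_of_mem (inter_mem hSD (hb S hS 0))
  exact hxb (subset_brack S 0 hxS)
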